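/- arXiv:1512.09290 — 3 statements merged into one kernel-verified Lean document; each statement's English description precedes it below -/
import Mathlib

section
/- Let (Ω, F, μ) be a probability space, X an integrable real random variable on it, and ε ∈ (0,1). Suppose t ∈ ℝ is such that μ{X > t} = ε. Then for every measurable set S ⊆ Ω with μ(S) ≤ ε, the conditional expectation of X given {X ≤ t} is at most the conditional expectation of X given the complement of S: E[X | X ≤ t] ≤ E[X | Ω \ S]. -/
/-!
Shift `X` by `t`: the function `g = X - t` is `≤ 0` on `A = {X ≤ t}` and `≥ 0` off it, so
`g · 1_A ≤ g · 1_B` pointwise for every set `B`, whence `∫_A g ≤ ∫_B g`. Since moreover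
`∫_A g ≤ 0` and `μ A = 1 - ε ≤ 1 - μ S ≤ μ Sᶜ`, dividing by the larger measure `μ Sᶜ`
only raises the average: `⨍_A g ≤ (∫_A g) / μ Sᶜ ≤ ⨍_{Sᶜ} g`.
-/

open MeasureTheory

section

variable {Ω : Type*} [MeasurableSpace Ω] {μ : Measure Ω} {f : Ω → ℝ} {s A B : Set Ω}

theorem setAverage_sub_const (hf : IntegrableOn f s μ) (hs₀ : μ s ≠ 0) (hs : μ s ≠ ⊤)
    (c : ℝ) : ⨍ x in s, (f x - c) ∂μ = ⨍ x in s, f x ∂μ - c := by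
  have hs_real : μ.real s ≠ 0 := ENNReal.toReal_ne_zero.2 ⟨hs₀, hs⟩
  rw [setAverage_eq, setAverage_eq, integral_sub hf (integrableOn_const hs), setIntegral_const,
    smul_sub, smul_smul, inv_mul_cancel₀ hs_real, one_smul]

theorem setIntegral_le_setIntegral_of_nonpos_of_nonneg_compl [SFinite μ]
    (hf : Integrable f μ) (hA : NullMeasurableSet A μ)
    (h_on : ∀ x ∈ A, f x ≤ 0) (h_off : ∀ x ∉ A, 0 ≤ f x) :
    ∫ x in A, f x ∂μ ≤ ∫ x in B, f x ∂μ := by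
  have hB := measurableSet_toMeasurable μ B
  rw [← Measure.restrict_toMeasurable_of_sFinite B, ← integral_indicator₀ hA,
    ← integral_indicator hB]
  refine integral_mono (hf.indicator₀ hA) (hf.indicator hB) fun x => ?_
  by_cases hxA : x ∈ A <;> by_cases hxB : x ∈ toMeasurable μ B <;>
    simp [Set.indicator, hxA, hxB, h_on, h_off]

theorem setAverage_le_setAverage_of_le_of_le_compl [IsFiniteMeasure μ] {t : ℝ}
    (hf : Integrable f μ) (hA : NullMeasurableSet A μ) (hA₀ : μ A ≠ 0)
    (hAB : μ A ≤ μ B)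
    (h_on : ∀ x ∈ A, f x ≤ t) (h_off : ∀ x ∉ A, t ≤ f x) :
    ⨍ x in A, f x ∂μ ≤ ⨍ x in B, f x ∂μ := by
  have hB₀ : μ B ≠ 0 := (pos_iff_ne_zero.2 hA₀ |>.trans_le hAB).ne'
  rw [← sub_le_sub_iff_right t,
    ← setAverage_sub_const hf.integrableOn hA₀ (measure_ne_top μ A),
    ← setAverage_sub_const hf.integrableOn hB₀ (measure_ne_top μ B),
    setAverage_eq, setAverage_eq, smul_eq_mul, smul_eq_mul]
  have h_int : ∫ x in A, (f x - t) ∂μ ≤ ∫ x in B, (f x - t) ∂μ :=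
    setIntegral_le_setIntegral_of_nonpos_of_nonneg_compl (hf.sub (integrable_const t)) hA
      (fun x hx => sub_nonpos.2 (h_on x hx)) (fun x hx => sub_nonneg.2 (h_off x hx))
  have h_nonpos : ∫ x in A, (f x - t) ∂μ ≤ 0 :=
    setIntegral_nonpos_of_ae_restrict <|
      (ae_restrict_mem₀ hA).mono fun x hx => sub_nonpos.2 (h_on x hx)
  have h_meas : μ.real A ≤ μ.real B := ENNReal.toReal_mono (measure_ne_top μ B) hAB
  have hA_pos : 0 < μ.real A := ENNReal.toReal_pos hA₀ (measure_ne_top μ A)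
  calc (μ.real A)⁻¹ * ∫ x in A, (f x - t) ∂μ
      ≤ (μ.real B)⁻¹ * ∫ x in A, (f x - t) ∂μ :=
        mul_le_mul_of_nonpos_right (inv_anti₀ hA_pos h_meas) h_nonpos
    _ ≤ (μ.real B)⁻¹ * ∫ x in B, (f x - t) ∂μ :=
        mul_le_mul_of_nonneg_left h_int (inv_nonneg.2 measureReal_nonneg)

end

theorem conditioned_tail_average_le_general {Ω : Type*} [MeasurableSpace Ω]
    (μ : Measure Ω) [IsProbabilityMeasure μ]
    (X : Ω → ℝ) (hX : Integrable X μ)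
    (ε : ℝ) (hε : ε ∈ Set.Ioo (0 : ℝ) 1)
    (t : ℝ) (ht : μ {ω | t < X ω} = ENNReal.ofReal ε)
    (S : Set Ω) (hSε : μ S ≤ ENNReal.ofReal ε) :
    ⨍ ω in {ω | X ω ≤ t}, X ω ∂μ ≤ ⨍ ω in Sᶜ, X ω ∂μ := by
  have hA : NullMeasurableSet {ω | X ω ≤ t} μ :=
    nullMeasurableSet_le hX.aemeasurable aemeasurable_const
  have hμA : μ {ω | X ω ≤ t} = 1 - ENNReal.ofReal ε := by
    rw [← ht,
      ← prob_compl_eq_one_sub₀ (nullMeasurableSet_lt aemeasurable_const hX.aemeasurable)]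
    simp only [Set.compl_ofPred, not_lt]
  have hA₀ : μ {ω | X ω ≤ t} ≠ 0 := by
    rw [hμA]
    exact (tsub_pos_of_lt (ENNReal.ofReal_lt_one.2 hε.2)).ne'
  have hAS : μ {ω | X ω ≤ t} ≤ μ Sᶜ := by
    rw [hμA, tsub_le_iff_left, ← measure_univ (μ := μ)]
    exact (measure_univ_le_add_compl S).trans (by gcongr)
  exact setAverage_le_setAverage_of_le_of_le_compl hX hA hA₀ hAS
    (fun _ hω => hω) (fun _ hω => (not_le.1 hω).le)

/-- Removing any set of measure at most `ε` is no better (for lowering the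
conditional expectation) than removing the upper tail `{X > t}` of the same measure `ε`:
`E[X | X ≤ t] ≤ E[X | Ω \ S]`.  Conditional expectations given an event are expressed as
set averages `⨍ ω in A, X ω ∂μ = (μ A)⁻¹ ∫_A X dμ`. -/
theorem conditioned_tail_average_le {Ω : Type*} [MeasurableSpace Ω]
    (μ : Measure Ω) [IsProbabilityMeasure μ]
    (X : Ω → ℝ) (hX : Integrable X μ)
    (ε : ℝ) (hε : ε ∈ Set.Ioo (0 : ℝ) 1)
    (t : ℝ) (ht : μ {ω | t < X ω} = ENNReal.ofReal ε)
    (S : Set Ω) (hS : MeasurableSet S) (hSε : μ S ≤ ENNReal.ofReal ε) :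
    ⨍ ω in {ω | X ω ≤ t}, X ω ∂μ ≤ ⨍ ω in Sᶜ, X ω ∂μ :=
  conditioned_tail_average_le_general μ X hX ε hε t ht S hSε
end

section
/- Let X be a non-negative random variable on a probability space (Ω, F, μ) and a > 0 a real number such that μ{X > t} ≤ a/t for all t > a. Then for every t > a, E[X | X ≤ t] ≤ (a/(1 − a/t))·(1 − log(a/t)). -/
open MeasureTheory Set Real
open scoped ENNReal

/-!
By the layer-cake formula, `∫_{X ≤ t} X dμ = ∫₀ᵗ μ{s < X ≤ t} ds`. The integrand is at most `1`
on `(0, a]` and at most `a / s` on `(a, t]`, so the integral is at most `a (1 + log (t / a))`;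
dividing by `μ{X ≤ t} ≥ 1 - a / t` gives the bound.
-/

section
variable {α : Type*} [MeasurableSpace α]

lemma one_sub_le_probReal_of_measure_compl_le {μ : Measure α} [IsProbabilityMeasure μ]
    {s : Set α} (hs : MeasurableSet s) {c : ℝ} (hc : 0 ≤ c) (h : μ sᶜ ≤ ENNReal.ofReal c) :
    1 - c ≤ μ.real s := by
  have : μ.real sᶜ ≤ c := ENNReal.toReal_le_of_le_ofReal hc h
  rw [probReal_compl_eq_one_sub hs] at this
  linarith

lemma lintegral_Ioc_ofReal_div {a b : ℝ} (c : ℝ) (hc : 0 ≤ c) (ha : 0 < a) (hab : a ≤ b) :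
    ∫⁻ s in Ioc a b, ENNReal.ofReal (c / s) = ENNReal.ofReal (c * log (b / a)) := by
  have hint : IntegrableOn (fun s : ℝ => c / s) (Ioc a b) :=
    (continuousOn_const.div continuousOn_id fun s hs => (ha.trans_le hs.1).ne').integrableOn_Icc
      |>.mono_set Ioc_subset_Icc_self
  rw [← ofReal_integral_eq_lintegral_ofReal hint (ae_restrict_of_forall_mem measurableSet_Ioc
    fun s hs => div_nonneg hc (ha.trans hs.1).le), ← intervalIntegral.integral_of_le hab]
  simp_rw [div_eq_mul_inv c]
  rw [intervalIntegral.integral_const_mul, integral_inv_of_pos ha (ha.trans_le hab)]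

variable {ν : Measure α} {f : α → ℝ}

lemma lintegral_ofReal_eq_setLIntegral_Ioc_meas_lt (hf0 : 0 ≤ᵐ[ν] f) (hf : AEMeasurable f ν)
    {t : ℝ} (ht : 0 ≤ t) (hft : ∀ᵐ x ∂ν, f x ≤ t) :
    ∫⁻ x, ENNReal.ofReal (f x) ∂ν = ∫⁻ s in Ioc 0 t, ν {x | s < f x} := by
  have hnull : ∀ s ∈ Ioi t, ν {x | s < f x} = 0 := fun s hs => by
    rw [measure_eq_zero_iff_ae_notMem]
    filter_upwards [hft] with x hx using not_lt.2 (hx.trans hs.le)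
  rw [lintegral_eq_lintegral_meas_lt ν hf0 hf, ← Ioc_union_Ioi_eq_Ioi ht,
    lintegral_union measurableSet_Ioi (Ioc_disjoint_Ioi le_rfl),
    setLIntegral_congr_fun measurableSet_Ioi hnull, lintegral_zero, add_zero]

lemma lintegral_ofReal_le_of_meas_lt_le_div (hν : ν univ ≤ 1) (hf0 : 0 ≤ᵐ[ν] f)
    (hf : AEMeasurable f ν) {a t : ℝ} (ha : 0 < a) (hat : a ≤ t) (hft : ∀ᵐ x ∂ν, f x ≤ t)
    (htail : ∀ s ∈ Ioc a t, ν {x | s < f x} ≤ ENNReal.ofReal (a / s)) :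
    ∫⁻ x, ENNReal.ofReal (f x) ∂ν ≤ ENNReal.ofReal (a * (1 + log (t / a))) := by
  have hlow : ∫⁻ s in Ioc 0 a, ν {x | s < f x} ≤ ENNReal.ofReal a := calc
    _ ≤ ∫⁻ _ in Ioc 0 a, 1 := lintegral_mono fun s => (measure_mono (subset_univ _)).trans hν
    _ = ENNReal.ofReal a := by simp
  have hhigh : ∫⁻ s in Ioc a t, ν {x | s < f x} ≤ ENNReal.ofReal (a * log (t / a)) := by
    rw [← lintegral_Ioc_ofReal_div a ha.le ha hat]
    exact setLIntegral_mono (by fun_prop) htail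
  have hlog : 0 ≤ log (t / a) := log_nonneg ((one_le_div ha).2 hat)
  rw [lintegral_ofReal_eq_setLIntegral_Ioc_meas_lt hf0 hf (ha.le.trans hat) hft,
    ← Ioc_union_Ioc_eq_Ioc ha.le hat,
    lintegral_union measurableSet_Ioc (Ioc_disjoint_Ioc_of_le le_rfl), mul_one_add,
    ENNReal.ofReal_add ha.le (mul_nonneg ha.le hlog)]
  exact add_le_add hlow hhigh

lemma integral_le_of_meas_lt_le_div (hν : ν univ ≤ 1) (hf0 : 0 ≤ᵐ[ν] f)
    (hf : AEMeasurable f ν) {a t : ℝ} (ha : 0 < a) (hat : a ≤ t) (hft : ∀ᵐ x ∂ν, f x ≤ t)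
    (htail : ∀ s ∈ Ioc a t, ν {x | s < f x} ≤ ENNReal.ofReal (a / s)) :
    ∫ x, f x ∂ν ≤ a * (1 + log (t / a)) := by
  rw [integral_eq_lintegral_of_nonneg_ae hf0 hf.aestronglyMeasurable]
  exact ENNReal.toReal_le_of_le_ofReal
    (mul_nonneg ha.le (by linarith [log_nonneg ((one_le_div ha).2 hat)]))
    (lintegral_ofReal_le_of_meas_lt_le_div hν hf0 hf ha hat hft htail)

end

/-- If a non-negative random variable `X` satisfies the tail bound
`μ{X > t} ≤ a/t` for all `t > a` (where `a > 0`), then for every `t > a`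
`E[X | X ≤ t] ≤ (a/(1 − a/t))·(1 − log(a/t))`.  The conditional expectation given the
event `{X ≤ t}` is expressed as the set average `⨍ ω in {X ≤ t}, X ω ∂μ`. -/
theorem conditional_expectation_of_tail_bound {Ω : Type*} [MeasurableSpace Ω]
    (μ : Measure Ω) [IsProbabilityMeasure μ]
    (X : Ω → ℝ) (hXm : Measurable X) (hXnn : ∀ ω, 0 ≤ X ω)
    (a : ℝ) (ha : 0 < a)
    (htail : ∀ t : ℝ, a < t → μ {ω | t < X ω} ≤ ENNReal.ofReal (a / t)) :
    ∀ t : ℝ, a < t →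
      ⨍ ω in {ω | X ω ≤ t}, X ω ∂μ ≤ (a / (1 - a / t)) * (1 - Real.log (a / t)) := by
  intro t hat
  set A := {ω | X ω ≤ t}
  have hA : MeasurableSet A := measurableSet_le hXm measurable_const
  have hqt : a / t < 1 := (div_lt_one (ha.trans hat)).2 hat
  have hmass : 1 - a / t ≤ μ.real A := by
    refine one_sub_le_probReal_of_measure_compl_le hA (div_pos ha (ha.trans hat)).le ?_
    simpa [A, compl_ofPred, not_le] using htail t hat
  have hint : ∫ ω in A, X ω ∂μ ≤ a * (1 - log (a / t)) := by
    have h := integral_le_of_meas_lt_le_div (f := X)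
      ((Measure.restrict_apply_le _ _).trans prob_le_one) (ae_of_all _ hXnn)
      hXm.aemeasurable ha hat.le (ae_restrict_of_forall_mem hA fun _ h => h)
      fun s hs => (Measure.restrict_apply_le _ _).trans (htail s hs.1)
    rwa [← inv_div, log_inv, ← sub_eq_add_neg] at h
  rw [setAverage_eq, smul_eq_mul, div_mul_eq_mul_div, le_div_iff₀ (sub_pos.2 hqt), mul_comm]
  calc (1 - a / t) * ((μ.real A)⁻¹ * ∫ ω in A, X ω ∂μ)
      ≤ μ.real A * ((μ.real A)⁻¹ * ∫ ω in A, X ω ∂μ) := by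
        gcongr
        exact mul_nonneg (by positivity) (setIntegral_nonneg hA fun ω _ => hXnn ω)
    _ = ∫ ω in A, X ω ∂μ := mul_inv_cancel_left₀ (by linarith) _
    _ ≤ a * (1 - log (a / t)) := hint
end

section
/- Let A be a Hermitian n×n complex matrix with eigenvalues λ₁, …, λₙ ordered by absolute value, |λ₁| ≥ … ≥ |λₙ|, with corresponding orthonormal eigenvectors u₁, …, uₙ, and assume |λ₁| > |λ₂| > 0. Let α ∈ (0, π/2) and let x ∈ ℂⁿ be a nonzero vector with ⟨x, u₁⟩ ≠ 0 and ⟨x, u₂⟩ ≠ 0. Then ρ_α(A, x) ≥ (log cot(α) + log‖Π₂(x)‖ − log‖Π₁(x)‖) / (log|λ₁| − log|λ₂|). -/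
open Matrix
open scoped ComplexInnerProductSpace

/-- The Fubini–Study distance `d_R(y,z) = arccos(|⟨y,z⟩|/(‖y‖‖z‖))`. -/
noncomputable def dFS {n : ℕ} (y z : EuclideanSpace ℂ (Fin n)) : ℝ :=
  Real.arccos (‖⟪y, z⟫‖ / (‖y‖ * ‖z‖))

/-- `ρ_α(A, x)`: the minimal number `k` of power iteration steps starting from `x`
after which the iterate `p_k` (a positive multiple of `Aᵏx`) lies in the
`α`-neighbourhood of `u` in Fubini–Study distance; `∞` if this never happens. -/
noncomputable def powIterSteps {n : ℕ} (α : ℝ) (A : Matrix (Fin n) (Fin n) ℂ)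
    (x u : EuclideanSpace ℂ (Fin n)) : ℕ∞ :=
  sInf ((fun k : ℕ => (k : ℕ∞)) '' {k : ℕ | dFS ((Matrix.toEuclideanLin A ^ k) x) u ≤ α})

/-!
If `p_k` is within Fubini–Study distance `α` of `u₁`, then `cos α ‖Aᵏx‖ ≤ |⟨u₁, Aᵏx⟩|`, and
Bessel's inequality `|⟨u₁, Aᵏx⟩|² + |⟨u₂, Aᵏx⟩|² ≤ ‖Aᵏx‖²` turns this into
`cot α · |λ₂|ᵏ |⟨u₂, x⟩| ≤ |λ₁|ᵏ |⟨u₁, x⟩|`. Taking logarithms and solving for `k` gives the bound.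
-/

lemma dFS_le_of_powIterSteps_eq {n : ℕ} {α : ℝ} {A : Matrix (Fin n) (Fin n) ℂ}
    {x u : EuclideanSpace ℂ (Fin n)} {k : ℕ} (hk : powIterSteps α A x u = k) :
    dFS ((Matrix.toEuclideanLin A ^ k) x) u ≤ α := by
  set S := {k : ℕ | dFS ((Matrix.toEuclideanLin A ^ k) x) u ≤ α}
  have hS : S.Nonempty := by
    by_contra hS
    rw [Set.not_nonempty_iff_eq_empty] at hS
    simp [powIterSteps, S, hS] at hk
  have hk' : sInf S = k := by
    have h : ((sInf S : ℕ) : ℕ∞) = sInf ((fun k : ℕ => (k : ℕ∞)) '' S) := by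
      rw [ENat.natCast_sInf hS, sInf_image]
    exact_mod_cast h.trans hk
  exact hk' ▸ Nat.sInf_mem hS

lemma cos_mul_le_norm_inner_of_dFS_le {n : ℕ} {y u : EuclideanSpace ℂ (Fin n)} {α : ℝ}
    (hα : α ≤ Real.pi) (h : dFS y u ≤ α) : Real.cos α * (‖y‖ * ‖u‖) ≤ ‖⟪y, u⟫‖ := by
  rcases (by positivity : 0 ≤ ‖y‖ * ‖u‖).eq_or_lt with hyu | hyu
  · rw [← hyu, mul_zero]
    positivity
  have hcs₀ : 0 ≤ ‖⟪y, u⟫‖ / (‖y‖ * ‖u‖) := by positivity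
  have hcs : ‖⟪y, u⟫‖ / (‖y‖ * ‖u‖) ≤ 1 := (div_le_one hyu).2 (norm_inner_le_norm y u)
  have hcos : Real.cos α ≤ ‖⟪y, u⟫‖ / (‖y‖ * ‖u‖) :=
    calc Real.cos α ≤ Real.cos (dFS y u) :=
          Real.cos_le_cos_of_nonneg_of_le_pi (Real.arccos_nonneg _) hα h
      _ = ‖⟪y, u⟫‖ / (‖y‖ * ‖u‖) := Real.cos_arccos (by linarith) hcs
  rwa [le_div_iff₀ hyu] at hcos

lemma Real.cot_pos_of_mem_Ioo {α : ℝ} (hα : α ∈ Set.Ioo 0 (Real.pi / 2)) : 0 < Real.cot α := by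
  rw [Real.cot_eq_cos_div_sin]
  exact div_pos (Real.cos_pos_of_mem_Ioo ⟨by linarith [hα.1, Real.pi_pos], hα.2⟩)
    (Real.sin_pos_of_pos_of_lt_pi hα.1 (by linarith [hα.2, Real.pi_pos]))

lemma cot_mul_le_of_cos_mul_le {α a b r : ℝ} (hα : α ∈ Set.Ioo 0 (Real.pi / 2))
    (ha : 0 ≤ a) (hb : 0 ≤ b) (hr : 0 ≤ r) (hab : a ^ 2 + b ^ 2 ≤ r ^ 2)
    (hcos_r : Real.cos α * r ≤ a) : Real.cot α * b ≤ a := by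
  have hcos : 0 < Real.cos α := Real.cos_pos_of_mem_Ioo ⟨by linarith [hα.1, Real.pi_pos], hα.2⟩
  have hsin : 0 < Real.sin α := Real.sin_pos_of_pos_of_lt_pi hα.1 (by linarith [hα.2, Real.pi_pos])
  have hsq : (Real.cos α * b) ^ 2 ≤ (Real.sin α * a) ^ 2 := by
    have hcr : (Real.cos α * r) ^ 2 ≤ a ^ 2 := pow_le_pow_left₀ (by positivity) hcos_r 2
    nlinarith [Real.sin_sq_add_cos_sq α, mul_le_mul_of_nonneg_left hab (sq_nonneg (Real.cos α))]
  have hle : Real.cos α * b ≤ Real.sin α * a :=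
    (pow_le_pow_iff_left₀ (by positivity) (by positivity) two_ne_zero).1 hsq
  rw [Real.cot_eq_cos_div_sin, div_mul_eq_mul_div, div_le_iff₀ hsin]
  linarith

lemma Orthonormal.cot_mul_norm_inner_le_of_dFS_le {n : ℕ} {ι : Type*}
    {u : ι → EuclideanSpace ℂ (Fin n)} (hu : Orthonormal ℂ u) {i j : ι} (hij : i ≠ j)
    {α : ℝ} (hα : α ∈ Set.Ioo 0 (Real.pi / 2)) {y : EuclideanSpace ℂ (Fin n)}
    (h : dFS y (u i) ≤ α) : Real.cot α * ‖⟪u j, y⟫‖ ≤ ‖⟪u i, y⟫‖ := by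
  classical
  have hbessel : ‖⟪u i, y⟫‖ ^ 2 + ‖⟪u j, y⟫‖ ^ 2 ≤ ‖y‖ ^ 2 := by
    simpa [Finset.sum_pair hij] using hu.sum_inner_products_le (s := {i, j}) y
  have hcos := cos_mul_le_norm_inner_of_dFS_le (by linarith [hα.2, Real.pi_pos]) h
  rw [hu.1 i, mul_one, norm_inner_symm] at hcos
  exact cot_mul_le_of_cos_mul_le hα (norm_nonneg _) (norm_nonneg _) (norm_nonneg _) hbessel hcos

lemma LinearMap.IsSymmetric.inner_pow_apply_of_apply_eq_smul {𝕜 E : Type*} [RCLike 𝕜]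
    [NormedAddCommGroup E] [InnerProductSpace 𝕜 E] {T : E →ₗ[𝕜] E} (hT : T.IsSymmetric)
    {v : E} {μ : ℝ} (hv : T v = (μ : 𝕜) • v) (x : E) (m : ℕ) :
    inner 𝕜 v ((T ^ m) x) = (μ : 𝕜) ^ m * inner 𝕜 v x := by
  induction m with
  | zero => simp
  | succ m ih =>
    rw [pow_succ', Module.End.mul_apply, ← hT, hv, inner_smul_left, ih, RCLike.conj_ofReal]
    ring

lemma div_log_sub_log_le_of_mul_pow_le {c p q μ ν : ℝ} {k : ℕ} (hc : 0 < c) (hp : 0 < p)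
    (hq : 0 < q) (hν : 0 < ν) (hνμ : ν < μ) (h : c * (ν ^ k * q) ≤ μ ^ k * p) :
    (Real.log c + Real.log q - Real.log p) / (Real.log μ - Real.log ν) ≤ k := by
  have hμ : 0 < μ := hν.trans hνμ
  have hlog := Real.log_le_log (by positivity) h
  rw [Real.log_mul hc.ne' (by positivity), Real.log_mul (by positivity) hq.ne',
    Real.log_mul (by positivity) hp.ne', Real.log_pow, Real.log_pow] at hlog
  rw [div_le_iff₀ (sub_pos.2 (Real.log_lt_log hν hνμ))]
  linarith

/-- lower bound for power iteration, Kostlan.  For a Hermitian `A`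
with eigenvalues `λ₁, …, λₙ` ordered by absolute value, orthonormal eigenvectors
`u₁, …, uₙ`, `|λ₁| > |λ₂| > 0`, `α ∈ (0, π/2)` and `x ≠ 0` with `⟨x,u₁⟩ ≠ 0` and
`⟨x,u₂⟩ ≠ 0`, we have
`ρ_α(A,x) ≥ (log cot α + log‖Π₂x‖ − log‖Π₁x‖)/(log|λ₁| − log|λ₂|)`. -/
theorem powerIteration_lower_bound
    {n : ℕ} (hn : 2 ≤ n) (A : Matrix (Fin n) (Fin n) ℂ) (hA : A.IsHermitian)
    (lam : Fin n → ℝ) (u : Fin n → EuclideanSpace ℂ (Fin n))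
    (hu : Orthonormal ℂ u)
    (heig : ∀ i, Matrix.toEuclideanLin A (u i) = (lam i : ℂ) • u i)
    (hgap : |lam ⟨1, by omega⟩| < |lam ⟨0, by omega⟩|)
    (hpos : 0 < |lam ⟨1, by omega⟩|)
    (α : ℝ) (hα : α ∈ Set.Ioo 0 (Real.pi / 2))
    (x : EuclideanSpace ℂ (Fin n))
    (hx1 : ⟪u ⟨0, by omega⟩, x⟫ ≠ 0) (hx2 : ⟪u ⟨1, by omega⟩, x⟫ ≠ 0) :
    ∀ k : ℕ, powIterSteps α A x (u ⟨0, by omega⟩) = (k : ℕ∞) →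
      (Real.log (Real.cot α)
          + Real.log ‖(⟪u ⟨1, by omega⟩, x⟫ : ℂ) • u ⟨1, by omega⟩‖
          - Real.log ‖(⟪u ⟨0, by omega⟩, x⟫ : ℂ) • u ⟨0, by omega⟩‖) /
        (Real.log |lam ⟨0, by omega⟩| - Real.log |lam ⟨1, by omega⟩|) ≤ (k : ℝ) := by
  intro k hk
  have hsym := Matrix.isSymmetric_toEuclideanLin_iff.mpr hA
  have hcot := hu.cot_mul_norm_inner_le_of_dFS_le (i := ⟨0, by omega⟩) (j := ⟨1, by omega⟩)
    (by simp [Fin.ext_iff]) hα (dFS_le_of_powIterSteps_eq hk)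
  simp only [hsym.inner_pow_apply_of_apply_eq_smul (heig _), norm_mul, norm_pow,
    RCLike.norm_ofReal] at hcot
  rw [norm_smul, norm_smul, hu.1, hu.1, mul_one, mul_one]
  exact div_log_sub_log_le_of_mul_pow_le (Real.cot_pos_of_mem_Ioo hα) (norm_pos_iff.2 hx1)
    (norm_pos_iff.2 hx2) hpos hgap hcot
end
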